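/- Let A be the N×N cyclic matrix with diagonal entries -α₁,...,-α_N (αᵢ > 0), subdiagonal 1's, top-right entry -β_N (β_N > 0), N > 2, and zeros elsewhere. If (β_N)/(α₁⋯α_N) < 1/cos(π/N)^N, then there exists a diagonal matrix D with positive entries such that DA + AᵀD is negative definite. -/

import Mathlib

/-!
Write `A = diag(g) C - diag(α)`, where `C` is the negacyclic shift (the cyclic shift that changes
sign when wrapping around) and `g = (β, 1, …, 1)`. For `r = (β / ∏ αᵢ)^(1/N)` there is a positive
vector `s` with `gᵢ sᵢ = r αᵢ sᵢ₋₁` (the cyclic product of the ratios `r αᵢ / gᵢ` is `1`), and with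
`D = diag(s² / α)` this gives `D A = -S (1 - r C) S` for `S = diag(s)`. Hence `-(D A + Aᵀ D)` is
congruent to `2 - r (C + Cᵀ)`, which is positive definite: the secant condition says
`r cos (π / N) < 1`, and every eigenvalue `2μ` of `C + Cᵀ` has `μ ≤ cos (π / N)`.

For the eigenvalue bound, extend an eigenvector to an `N`-antiperiodic sequence `f` on `ℤ`. It
satisfies `f (k - 1) + f (k + 1) = 2 μ f k`, so `f (k - N) + f (k + N) = 2 T_N(μ) f k` with `T_N`
the Chebyshev polynomial. Antiperiodicity forces `T_N(μ) = -1`, that is, `μ = cos (k π / N)` with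
`k` odd.
-/

open Matrix Real
open Polynomial.Chebyshev (T)

theorem apply_sub_add_apply_add_eq_two_mul_eval_T {R : Type*} [CommRing R] {f : ℤ → R} {x : R}
    (hf : ∀ k, f (k - 1) + f (k + 1) = 2 * x * f k) (n : ℕ) (k : ℤ) :
    f (k - n) + f (k + n) = 2 * (T R n).eval x * f k := by
  induction n using Nat.twoStepInduction generalizing k with
  | zero =>
    simp only [CharP.cast_eq_zero, sub_zero, add_zero, Polynomial.Chebyshev.T_zero,
      Polynomial.eval_one]
    ring
  | one => simpa using hf k
  | more n ih₀ ih₁ =>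
    have hlo : f (k - (n + 2 : ℕ)) + f (k - n) = 2 * x * f (k - (n + 1 : ℕ)) := by
      convert hf (k - (n + 1 : ℕ)) using 3 <;> push_cast <;> ring
    have hhi : f (k + n) + f (k + (n + 2 : ℕ)) = 2 * x * f (k + (n + 1 : ℕ)) := by
      convert hf (k + (n + 1 : ℕ)) using 3 <;> push_cast <;> ring
    have hT : T R (n + 2 : ℕ) = 2 * Polynomial.X * T R (n + 1 : ℕ) - T R n := by
      push_cast
      exact Polynomial.Chebyshev.T_add_two R n
    rw [hT]
    simp only [Polynomial.eval_sub, Polynomial.eval_mul, Polynomial.eval_X, Polynomial.eval_ofNat]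
    linear_combination hlo + hhi + 2 * x * ih₁ k - ih₀ k

theorem le_cos_pi_div_of_eval_T_eq_neg_one {n : ℕ} (hn : n ≠ 0) {x : ℝ}
    (h : (T ℝ n).eval x = -1) : x ≤ cos (π / n) := by
  obtain ⟨k, hkn, hk, rfl⟩ := (Polynomial.Chebyshev.eval_T_real_eq_neg_one_iff hn x).mp h
  have hn' : (0 : ℝ) < n := by positivity
  have hk' : (1 : ℝ) ≤ k := by exact_mod_cast hk.pos
  apply cos_le_cos_of_nonneg_of_le_pi (by positivity)
  · rw [div_le_iff₀ hn', mul_comm]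
    gcongr
  · gcongr
    exact le_mul_of_one_le_left pi_pos.le hk'

theorem Function.Antiperiodic.le_cos_pi_div {N : ℕ} {f : ℤ → ℝ} (hf : Antiperiodic f N)
    (hf0 : f ≠ 0) {x : ℝ} (hrec : ∀ k, f (k - 1) + f (k + 1) = 2 * x * f k) :
    x ≤ cos (π / N) := by
  obtain ⟨k, hk⟩ := Function.ne_iff.mp hf0
  have hN : N ≠ 0 := by
    rintro rfl
    have := hf k
    simp only [CharP.cast_eq_zero, add_zero, Pi.zero_apply] at this hk
    exact hk (self_eq_neg.mp this)
  refine le_cos_pi_div_of_eval_T_eq_neg_one hN (mul_right_cancel₀ hk ?_)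
  have := apply_sub_add_apply_add_eq_two_mul_eval_T hrec N k
  rw [hf.sub_eq, hf k] at this
  linarith

theorem Matrix.IsHermitian.dotProduct_mulVec_le {n : Type*} [Fintype n] [DecidableEq n]
    {M : Matrix n n ℝ} (hM : M.IsHermitian) {c : ℝ}
    (hc : ∀ (μ : ℝ) (v : n → ℝ), v ≠ 0 → M *ᵥ v = μ • v → μ ≤ c) (x : n → ℝ) :
    x ⬝ᵥ (M *ᵥ x) ≤ c * (x ⬝ᵥ x) := by
  have hH : (c • 1 - M).IsHermitian := (isHermitian_one.smul (IsSelfAdjoint.all c)).sub hM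
  have hpsd : (c • 1 - M).PosSemidef := by
    refine hH.posSemidef_iff_eigenvalues_nonneg.mpr fun i => ?_
    set v := hH.eigenvectorBasis i
    have hv : M *ᵥ v = (c - hH.eigenvalues i) • v := by
      have := hH.mulVec_eigenvectorBasis i
      rw [sub_mulVec, smul_mulVec, one_mulVec] at this
      rw [sub_smul, ← this]
      abel
    have hv0 : (v : n → ℝ) ≠ 0 := fun h =>
      hH.eigenvectorBasis.orthonormal.ne_zero i (by ext j; exact congrFun h j)
    have := hc _ _ hv0 hv
    simp only [Pi.zero_apply]
    linarith
  have := hpsd.dotProduct_mulVec_nonneg x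
  rw [star_trivial, sub_mulVec, smul_mulVec, one_mulVec, dotProduct_sub, dotProduct_smul,
    smul_eq_mul] at this
  linarith

section Negacyclic

variable {N : ℕ} [NeZero N]

def negacyclicSign (i : Fin N) : ℝ := if i = 0 then -1 else 1

lemma negacyclicSign_mul_self (i : Fin N) : negacyclicSign i * negacyclicSign i = 1 := by
  unfold negacyclicSign
  split_ifs <;> norm_num

variable (N) in
def negacyclicShift : Matrix (Fin N) (Fin N) ℝ :=
  Matrix.of fun i j => if j = i - 1 then negacyclicSign i else 0

lemma negacyclicShift_mulVec (y : Fin N → ℝ) (i : Fin N) :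
    (negacyclicShift N *ᵥ y) i = negacyclicSign i * y (i - 1) := by
  simp [negacyclicShift, mulVec, dotProduct, ite_mul]

lemma negacyclicShift_transpose_mulVec (y : Fin N → ℝ) (i : Fin N) :
    ((negacyclicShift N)ᵀ *ᵥ y) i = negacyclicSign (i + 1) * y (i + 1) := by
  simp [negacyclicShift, mulVec, dotProduct, ite_mul, eq_sub_iff_add_eq, eq_comm]

section Extension

open scoped Fin.CommRing

-- `ℤ`-division rounds down here, so the value at `N * q + r` with `0 ≤ r < N` is `(-1) ^ q * y r`.
noncomputable def negacyclicExtension (y : Fin N → ℝ) (k : ℤ) : ℝ := (-1) ^ (k / N) * y k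

lemma negacyclicExtension_natCast_val (y : Fin N → ℝ) (i : Fin N) :
    negacyclicExtension y i.val = y i := by
  rw [negacyclicExtension, Int.ediv_eq_zero_of_lt (by positivity) (by exact_mod_cast i.isLt)]
  simp

lemma antiperiodic_negacyclicExtension (y : Fin N → ℝ) :
    Function.Antiperiodic (negacyclicExtension y) N := by
  intro k
  have hN : (N : ℤ) ≠ 0 := by exact_mod_cast NeZero.ne N
  rw [negacyclicExtension, negacyclicExtension, Int.add_ediv_of_dvd_right dvd_rfl,
    Int.ediv_self hN, zpow_add_one₀ (by norm_num), Int.cast_add, Int.cast_natCast,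
    Fin.natCast_self, add_zero]
  ring

lemma neg_one_zpow_add_one_ediv (k : ℤ) :
    (-1 : ℝ) ^ ((k + 1) / N) = negacyclicSign ((k + 1 : ℤ) : Fin N) * (-1) ^ (k / N) := by
  have hN : (0 : ℤ) < N := by exact_mod_cast NeZero.pos N
  have hk := Int.emod_add_mul_ediv k N
  have hr := Int.emod_nonneg k hN.ne'
  have hr' := Int.emod_lt_of_pos k hN
  rcases (show k % N + 1 < N ∨ k % N + 1 = N by omega) with h | h
  · obtain ⟨hq, hrem⟩ := (Int.ediv_emod_unique (a := k + 1) (r := k % N + 1) (q := k / N) hN).mpr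
      ⟨by omega, by omega, h⟩
    have : ((k + 1 : ℤ) : Fin N) ≠ 0 := by
      rw [Ne, Fin.ext_iff, Fin.val_intCast, hrem, Fin.val_zero]
      omega
    rw [negacyclicSign, if_neg this, hq, one_mul]
  · obtain ⟨hq, hrem⟩ := (Int.ediv_emod_unique (a := k + 1) (r := 0) (q := k / N + 1) hN).mpr
      ⟨by linear_combination hk - h, le_rfl, hN⟩
    have : ((k + 1 : ℤ) : Fin N) = 0 := by
      rw [Fin.ext_iff, Fin.val_intCast, hrem, Fin.val_zero, Int.toNat_zero]
    rw [negacyclicSign, if_pos this, hq, zpow_add_one₀ (by norm_num)]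
    ring

lemma negacyclicExtension_add_one (y : Fin N → ℝ) (k : ℤ) :
    negacyclicExtension y (k + 1) = (-1) ^ (k / N) * ((negacyclicShift N)ᵀ *ᵥ y) k := by
  rw [negacyclicExtension, neg_one_zpow_add_one_ediv, negacyclicShift_transpose_mulVec,
    Int.cast_add, Int.cast_one]
  ring

lemma negacyclicExtension_sub_one (y : Fin N → ℝ) (k : ℤ) :
    negacyclicExtension y (k - 1) = (-1) ^ (k / N) * (negacyclicShift N *ᵥ y) k := by
  have h := neg_one_zpow_add_one_ediv (N := N) (k - 1)
  rw [sub_add_cancel] at h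
  rw [negacyclicExtension, negacyclicShift_mulVec, h, Int.cast_sub, Int.cast_one]
  linear_combination
    (-((-1 : ℝ) ^ ((k - 1) / N) * y (k - 1))) * negacyclicSign_mul_self (k : Fin N)

end Extension

theorem le_two_mul_cos_pi_div_of_mulVec_eq_smul {μ : ℝ} {w : Fin N → ℝ} (hw : w ≠ 0)
    (h : (negacyclicShift N + (negacyclicShift N)ᵀ) *ᵥ w = μ • w) : μ ≤ 2 * cos (π / N) := by
  have hrec (k : ℤ) : negacyclicExtension w (k - 1) + negacyclicExtension w (k + 1) =
      2 * (μ / 2) * negacyclicExtension w k := by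
    rw [negacyclicExtension_sub_one, negacyclicExtension_add_one, ← mul_add, ← Pi.add_apply,
      ← add_mulVec, h, negacyclicExtension, Pi.smul_apply, smul_eq_mul]
    ring
  have hf0 : negacyclicExtension w ≠ 0 := by
    obtain ⟨i, hi⟩ := Function.ne_iff.mp hw
    exact Function.ne_iff.mpr ⟨i.val, by rwa [negacyclicExtension_natCast_val]⟩
  linarith [(antiperiodic_negacyclicExtension w).le_cos_pi_div hf0 hrec]

theorem dotProduct_negacyclicShift_mulVec_le (y : Fin N → ℝ) :
    y ⬝ᵥ (negacyclicShift N *ᵥ y) ≤ cos (π / N) * (y ⬝ᵥ y) := by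
  have hH : (negacyclicShift N + (negacyclicShift N)ᵀ).IsHermitian := by
    have := isHermitian_add_transpose_self (negacyclicShift N)
    rwa [conjTranspose_eq_transpose_of_trivial] at this
  have := hH.dotProduct_mulVec_le (fun μ v hv h => le_two_mul_cos_pi_div_of_mulVec_eq_smul hv h) y
  rw [add_mulVec, dotProduct_add, dotProduct_transpose_mulVec] at this
  linarith

theorem posDef_add_transpose_one_sub_smul_negacyclicShift {r : ℝ} (hr0 : 0 ≤ r)
    (hr : r * cos (π / N) < 1) :
    ((1 - r • negacyclicShift N) + (1 - r • negacyclicShift N)ᵀ).PosDef := by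
  refine PosDef.of_dotProduct_mulVec_pos ?_ fun x hx => ?_
  · have := isHermitian_add_transpose_self (1 - r • negacyclicShift N)
    rwa [conjTranspose_eq_transpose_of_trivial] at this
  rw [star_trivial, add_mulVec, dotProduct_add, dotProduct_transpose_mulVec, sub_mulVec,
    one_mulVec, smul_mulVec, dotProduct_sub, dotProduct_smul, smul_eq_mul]
  have hx2 : 0 < x ⬝ᵥ x := by simpa using dotProduct_star_self_pos_iff.mpr hx
  have := dotProduct_negacyclicShift_mulVec_le x
  nlinarith

end Negacyclic

section CyclicMatrix

variable {N : ℕ} [NeZero N]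

lemma Fin.val_sub_one_eq_ite (i : Fin N) : (i - 1).val = if i = 0 then N - 1 else i.val - 1 := by
  obtain ⟨m, rfl⟩ := Nat.exists_eq_succ_of_ne_zero (NeZero.ne N)
  simpa using Fin.coe_sub_one i

noncomputable def cyclicMatrix (α : Fin N → ℝ) (β : ℝ) : Matrix (Fin N) (Fin N) ℝ :=
  diagonal (fun i => if i = 0 then β else 1) * negacyclicShift N - diagonal α

lemma cyclicMatrix_apply (hN : 1 < N) (α : Fin N → ℝ) (β : ℝ) (i j : Fin N) :
    cyclicMatrix α β i j = if i = j then -α i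
        else if i.val = j.val + 1 then 1
        else if i.val = 0 ∧ j.val = N - 1 then -β
        else 0 := by
  have hsub := Fin.val_sub_one_eq_ite i
  simp only [cyclicMatrix, Matrix.sub_apply, diagonal_mul, diagonal_apply, negacyclicShift,
    of_apply, negacyclicSign]
  simp only [Fin.ext_iff, Fin.val_zero] at hsub ⊢
  split_ifs at hsub ⊢ <;> first | omega | ring

lemma diagonal_mul_cyclicMatrix {α d s : Fin N → ℝ} {β r : ℝ} (hdα : ∀ i, d i * α i = s i ^ 2)
    (hdβ : ∀ i, d i * (if i = 0 then β else 1) = r * s i * s (i - 1)) :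
    diagonal d * cyclicMatrix α β = -(diagonal s * (1 - r • negacyclicShift N) * diagonal s) := by
  ext i j
  have hshift : d i * (if i = 0 then β else 1) * negacyclicShift N i j =
      r * s i * s j * negacyclicShift N i j := by
    by_cases hj : j = i - 1
    · rw [hj, hdβ]
    · simp [negacyclicShift, hj]
  simp only [cyclicMatrix, mul_sub, ← mul_assoc, diagonal_mul, mul_diagonal,
    Matrix.sub_apply, Matrix.neg_apply, Matrix.smul_apply, smul_eq_mul]
  rcases eq_or_ne i j with rfl | hij
  · simp only [diagonal_apply_eq, one_apply_eq]
    linear_combination hshift - hdα i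
  · simp only [diagonal_apply_ne _ hij, one_apply_ne hij]
    linear_combination hshift

lemma exists_pos_eq_mul_apply_sub_one {c : Fin N → ℝ} (hc : ∀ i, 0 < c i)
    (hprod : ∏ i, c i = 1) : ∃ s : Fin N → ℝ, (∀ i, 0 < s i) ∧ ∀ i, s i = c i * s (i - 1) := by
  refine ⟨fun i => ∏ j ∈ Finset.Iic i, c j, fun i => Finset.prod_pos fun j _ => hc j, fun i => ?_⟩
  dsimp only
  have hsub := Fin.val_sub_one_eq_ite i
  by_cases hi : i = 0
  · rw [if_pos hi] at hsub
    subst hi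
    have h0 : Finset.Iic (0 : Fin N) = {0} := by
      ext j
      simp
    have h1 : Finset.Iic (0 - 1 : Fin N) = Finset.univ := by
      ext j
      simp only [Finset.mem_Iic, Finset.mem_univ, iff_true, Fin.le_iff_val_le_val, hsub]
      omega
    rw [h0, h1, hprod, Finset.prod_singleton, mul_one]
  · rw [if_neg hi] at hsub
    have hi' : i.val ≠ 0 := fun h => hi (Fin.ext h)
    have : Finset.Iic i = insert i (Finset.Iic (i - 1)) := by
      ext j
      simp only [Finset.mem_Iic, Finset.mem_insert, Fin.le_iff_val_le_val, Fin.ext_iff, hsub]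
      omega
    have hi_mem : i ∉ Finset.Iic (i - 1) := by
      simp only [Finset.mem_Iic, Fin.le_iff_val_le_val, hsub]
      omega
    rw [this, Finset.prod_insert hi_mem]

lemma exists_pos_ite_mul_eq_mul_apply_sub_one {α : Fin N → ℝ} (hα : ∀ i, 0 < α i) {β r : ℝ}
    (hβ : 0 < β) (hr : 0 < r) (hrN : r ^ N * ∏ i, α i = β) :
    ∃ s : Fin N → ℝ, (∀ i, 0 < s i) ∧
      ∀ i, (if i = 0 then β else 1) * s i = r * α i * s (i - 1) := by
  have hg (i : Fin N) : 0 < if i = 0 then β else 1 := by split_ifs <;> positivity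
  obtain ⟨s, hs0, hs⟩ := exists_pos_eq_mul_apply_sub_one
    (c := fun i => r * α i / if i = 0 then β else 1)
    (fun i => by have := hα i; have := hg i; positivity)
    (by simp [Finset.prod_div_distrib, Finset.prod_mul_distrib, hrN, hβ.ne'])
  exact ⟨s, hs0, fun i => by rw [hs i]; field_simp [(hg i).ne']⟩

end CyclicMatrix

theorem neg_diagonal_mul_add_transpose_mul_diagonal {n : Type*} [Fintype n] [DecidableEq n]
    {A K : Matrix n n ℝ} {d s : n → ℝ} (h : diagonal d * A = -(diagonal s * K * diagonal s)) :
    -(diagonal d * A + Aᵀ * diagonal d) = (diagonal s)ᴴ * (K + Kᵀ) * diagonal s := by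
  have hT : Aᵀ * diagonal d = (diagonal d * A)ᵀ := by rw [transpose_mul, diagonal_transpose]
  rw [hT, h]
  simp only [transpose_neg, transpose_mul, diagonal_transpose,
    conjTranspose_eq_transpose_of_trivial, Matrix.mul_add, Matrix.add_mul, Matrix.mul_assoc,
    neg_add, neg_neg]

theorem exists_pos_pow_eq_mul_cos_pi_div_lt_one {N : ℕ} (hN : 2 < N) {a : ℝ} (ha : 0 < a)
    (hsec : a < 1 / cos (π / N) ^ N) : ∃ r : ℝ, 0 < r ∧ r ^ N = a ∧ r * cos (π / N) < 1 := by
  have hN0 : N ≠ 0 := by omega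
  have hcos : 0 < cos (π / N) := by
    apply cos_pos_of_mem_Ioo
    constructor
    · linarith [show 0 < π / N by positivity, pi_pos]
    · exact div_lt_div_of_pos_left pi_pos two_pos (by exact_mod_cast hN)
  refine ⟨a ^ (N⁻¹ : ℝ), by positivity, rpow_inv_natCast_pow ha.le hN0, ?_⟩
  rw [← pow_lt_one_iff_of_nonneg (by positivity) hN0, mul_pow, rpow_inv_natCast_pow ha.le hN0]
  rwa [lt_div_iff₀ (by positivity)] at hsec

theorem stmt_4 (N : ℕ) (hN : 2 < N) (α : Fin N → ℝ) (βN : ℝ)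
    (hα : ∀ i, 0 < α i) (hβ : 0 < βN)
    (A : Matrix (Fin N) (Fin N) ℝ)
    (hA : ∀ i j : Fin N,
      A i j = if i = j then -α i
        else if i.val = j.val + 1 then 1
        else if i.val = 0 ∧ j.val = N - 1 then -βN
        else 0)
    (hsec : βN / (∏ i, α i) < 1 / Real.cos (Real.pi / N) ^ N) :
    ∃ D : Fin N → ℝ, (∀ i, 0 < D i) ∧
      (-(Matrix.diagonal D * A + Aᵀ * Matrix.diagonal D)).PosDef := by
  have : NeZero N := ⟨by omega⟩
  obtain rfl : A = cyclicMatrix α βN :=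
    Matrix.ext fun i j => (hA i j).trans (cyclicMatrix_apply (by omega) α βN i j).symm
  have hP : 0 < ∏ i, α i := Finset.prod_pos fun i _ => hα i
  obtain ⟨r, hr0, hrN, hr⟩ := exists_pos_pow_eq_mul_cos_pi_div_lt_one hN (div_pos hβ hP) hsec
  obtain ⟨s, hs0, hs⟩ :=
    exists_pos_ite_mul_eq_mul_apply_sub_one hα hβ hr0 (by rw [hrN]; field_simp)
  refine ⟨fun i => s i ^ 2 / α i, fun i => by have := hs0 i; have := hα i; positivity, ?_⟩
  have hDA := diagonal_mul_cyclicMatrix (α := α) (β := βN) (d := fun i => s i ^ 2 / α i)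
    (fun i => div_mul_cancel₀ _ (hα i).ne')
    (fun i => by field_simp [(hα i).ne']; linear_combination s i * hs i)
  rw [neg_diagonal_mul_add_transpose_mul_diagonal hDA]
  exact (posDef_add_transpose_one_sub_smul_negacyclicShift hr0.le hr).conjTranspose_mul_mul_same
    (mulVec_injective_iff_isUnit.mpr
      (isUnit_diagonal.mpr (Pi.isUnit_iff.mpr fun i => (hs0 i).ne'.isUnit)))
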